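/- Let J be the left Moyal ideal generated by x₂² in polynomials on ℝ⁴. A function h = h₀(x₁,p₁,p₂) + h₁(x₁,p₁,p₂) ∗_λ x₂ satisfies x₂² ∗_λ h ∈ J only if h₀ satisfies the PDE x₂-coefficient condition; in particular any h of the form h = a(x₁,p₁) + b(x₁,p₁)p₂ + (c(x₁,p₁) + d(x₁,p₁)p₂ − b(x₁,p₁)p₂²/(2λ)) ∗_λ x₂ satisfies x₂² ∗_λ h ∈ J. -/

import Mathlib

open MvPolynomial

noncomputable section

/-- Polynomial functions on ℝ⁴ with coordinates x₁ = X 0, x₂ = X 1, p₁ = X 2, p₂ = X 3. -/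
abbrev P4 : Type := MvPolynomial (Fin 4) ℝ
/-- Doubled ring: x₁,x₂,p₁,p₂ = X 0..3 and x̃₁,x̃₂,p̃₁,p̃₂ = X 4..7. -/
abbrev Q4 : Type := MvPolynomial (Fin 8) ℝ

def emb4a : P4 →ₐ[ℝ] Q4 := rename (fun i : Fin 4 => (⟨i.val, by omega⟩ : Fin 8))
def emb4b : P4 →ₐ[ℝ] Q4 := rename (fun i : Fin 4 => (⟨i.val + 4, by omega⟩ : Fin 8))
def diag4 : Q4 →ₐ[ℝ] P4 := aeval (fun j : Fin 8 => X (⟨j.val % 4, by omega⟩ : Fin 4))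

/-- partial derivative in the j-th variable of the doubled ring, as a linear endomorphism -/
def pd4 (j : Fin 8) : Module.End ℝ Q4 := (pderiv j).toLinearMap

/-- The bidifferential operator Σᵢ (∂_{xᵢ}∂_{p̃ᵢ} − ∂_{x̃ᵢ}∂_{pᵢ}) on the doubled ring. -/
def D4 : Module.End ℝ Q4 :=
  (pd4 0 * pd4 6 - pd4 4 * pd4 2) + (pd4 1 * pd4 7 - pd4 5 * pd4 3)

/-- The Moyal star product on polynomials in (x₁,x₂,p₁,p₂):
f ∗_λ g = exp(λ Σᵢ(∂_{xᵢ}∂_{p̃ᵢ} − ∂_{x̃ᵢ}∂_{pᵢ})) f(x,p) g(x̃,p̃)|_diag.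
Since f and g are polynomials, the exponential series truncates. -/
def moyal4 (lam : ℝ) (f g : P4) : P4 :=
  diag4 (∑ n ∈ Finset.range (f.totalDegree + g.totalDegree + 1),
    (lam ^ n / n.factorial : ℝ) • ((D4 ^ n) (emb4a f * emb4b g)))

lemma pderiv_emb4a (i : Fin 4) (f : P4) :
    pderiv ((⟨i.val, by omega⟩ : Fin 8)) (emb4a f) = emb4a (pderiv i f) := by
  have hinj : Function.Injective (fun i : Fin 4 => (⟨i.val, by omega⟩ : Fin 8)) := by
    intro x y h
    simp only [Fin.mk.injEq] at h
    exact Fin.ext h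
  unfold emb4a
  exact pderiv_rename hinj i f

lemma pderiv_emb4b (i : Fin 4) (f : P4) :
    pderiv ((⟨i.val + 4, by omega⟩ : Fin 8)) (emb4b f) = emb4b (pderiv i f) := by
  have hinj : Function.Injective (fun i : Fin 4 => (⟨i.val + 4, by omega⟩ : Fin 8)) := by
    intro x y h
    simp only [Fin.mk.injEq] at h
    exact Fin.ext (by omega)
  unfold emb4b
  exact pderiv_rename hinj i f

lemma pderiv_emb4a_zero (j : Fin 8) (hj : 4 ≤ j.val) (f : P4) :
    pderiv j (emb4a f) = 0 := by
  apply pderiv_eq_zero_of_notMem_vars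
  intro h
  have := vars_rename _ f h
  simp only [Finset.mem_image] at this
  obtain ⟨i, -, hi⟩ := this
  have : i.val = j.val := congrArg Fin.val hi
  omega

lemma pderiv_emb4b_zero (j : Fin 8) (hj : j.val < 4) (f : P4) :
    pderiv j (emb4b f) = 0 := by
  apply pderiv_eq_zero_of_notMem_vars
  intro h
  have := vars_rename _ f h
  simp only [Finset.mem_image] at this
  obtain ⟨i, -, hi⟩ := this
  have : i.val + 4 = j.val := congrArg Fin.val hi
  omega

lemma pa0 (f : P4) : pderiv (0:Fin 8) (emb4a f) = emb4a (pderiv (0:Fin 4) f) := pderiv_emb4a 0 f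
lemma pa1 (f : P4) : pderiv (1:Fin 8) (emb4a f) = emb4a (pderiv (1:Fin 4) f) := pderiv_emb4a 1 f
lemma pa2 (f : P4) : pderiv (2:Fin 8) (emb4a f) = emb4a (pderiv (2:Fin 4) f) := pderiv_emb4a 2 f
lemma pa3 (f : P4) : pderiv (3:Fin 8) (emb4a f) = emb4a (pderiv (3:Fin 4) f) := pderiv_emb4a 3 f
lemma pa4 (f : P4) : pderiv (4:Fin 8) (emb4a f) = 0 := pderiv_emb4a_zero 4 (by decide) f
lemma pa5 (f : P4) : pderiv (5:Fin 8) (emb4a f) = 0 := pderiv_emb4a_zero 5 (by decide) f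
lemma pa6 (f : P4) : pderiv (6:Fin 8) (emb4a f) = 0 := pderiv_emb4a_zero 6 (by decide) f
lemma pa7 (f : P4) : pderiv (7:Fin 8) (emb4a f) = 0 := pderiv_emb4a_zero 7 (by decide) f
lemma pb4 (f : P4) : pderiv (4:Fin 8) (emb4b f) = emb4b (pderiv (0:Fin 4) f) := pderiv_emb4b 0 f
lemma pb5 (f : P4) : pderiv (5:Fin 8) (emb4b f) = emb4b (pderiv (1:Fin 4) f) := pderiv_emb4b 1 f
lemma pb6 (f : P4) : pderiv (6:Fin 8) (emb4b f) = emb4b (pderiv (2:Fin 4) f) := pderiv_emb4b 2 f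
lemma pb7 (f : P4) : pderiv (7:Fin 8) (emb4b f) = emb4b (pderiv (3:Fin 4) f) := pderiv_emb4b 3 f
lemma pb0 (f : P4) : pderiv (0:Fin 8) (emb4b f) = 0 := pderiv_emb4b_zero 0 (by decide) f
lemma pb1 (f : P4) : pderiv (1:Fin 8) (emb4b f) = 0 := pderiv_emb4b_zero 1 (by decide) f
lemma pb2 (f : P4) : pderiv (2:Fin 8) (emb4b f) = 0 := pderiv_emb4b_zero 2 (by decide) f
lemma pb3 (f : P4) : pderiv (3:Fin 8) (emb4b f) = 0 := pderiv_emb4b_zero 3 (by decide) f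

lemma D4_apply (f g : P4) : D4 (emb4a f * emb4b g) =
    emb4a (pderiv (0:Fin 4) f) * emb4b (pderiv (2:Fin 4) g)
      - emb4a (pderiv (2:Fin 4) f) * emb4b (pderiv (0:Fin 4) g)
    + (emb4a (pderiv (1:Fin 4) f) * emb4b (pderiv (3:Fin 4) g)
      - emb4a (pderiv (3:Fin 4) f) * emb4b (pderiv (1:Fin 4) g)) := by
  simp only [D4, pd4, LinearMap.add_apply, LinearMap.sub_apply, Module.End.mul_apply,
    Derivation.coeFn_coe, pderiv_mul,
    pa0, pa1, pa2, pa3, pa4, pa5, pa6, pa7, pb0, pb1, pb2, pb3, pb4, pb5, pb6, pb7,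
    mul_zero, zero_mul, add_zero, zero_add, map_zero]

lemma diag_a (f : P4) : diag4 (emb4a f) = f := by
  show diag4 (rename _ f) = f
  unfold diag4
  rw [aeval_rename]
  have : ((fun j : Fin 8 => (X (⟨j.val % 4, by omega⟩ : Fin 4) : P4)) ∘
      (fun i : Fin 4 => (⟨i.val, by omega⟩ : Fin 8))) = X := by
    funext i
    simp only [Function.comp_apply]
    congr 1
    exact Fin.ext (Nat.mod_eq_of_lt i.isLt)
  rw [this]
  exact aeval_X_left_apply f

lemma diag_b (f : P4) : diag4 (emb4b f) = f := by
  show diag4 (rename _ f) = f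
  unfold diag4
  rw [aeval_rename]
  have : ((fun j : Fin 8 => (X (⟨j.val % 4, by omega⟩ : Fin 4) : P4)) ∘
      (fun i : Fin 4 => (⟨i.val + 4, by omega⟩ : Fin 8))) = X := by
    funext i
    simp only [Function.comp_apply]
    congr 1
    exact Fin.ext (by simp [Nat.add_mod, Nat.mod_eq_of_lt i.isLt])
  rw [this]
  exact aeval_X_left_apply f

lemma moyal4_eq3 (lam : ℝ) (f g : P4) (hN : 3 ≤ f.totalDegree + g.totalDegree + 1)
    (T1 T2 : Q4) (h1 : D4 (emb4a f * emb4b g) = T1) (h2 : D4 T1 = T2) (h3 : D4 T2 = 0) :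
    moyal4 lam f g = f * g + lam • diag4 T1 + (lam ^ 2 / 2) • diag4 T2 := by
  unfold moyal4
  rw [← Finset.sum_subset (Finset.range_subset_range.mpr hN) (fun n _ hn3 => ?_)]
  · rw [Finset.sum_range_succ, Finset.sum_range_succ, Finset.sum_range_one]
    have hD2 : (D4 ^ 2) (emb4a f * emb4b g) = T2 := by
      rw [pow_two, Module.End.mul_apply, h1, h2]
    have e0 : (D4 ^ 0) (emb4a f * emb4b g) = emb4a f * emb4b g := by
      rw [pow_zero, Module.End.one_apply]
    have e1 : (D4 ^ 1) (emb4a f * emb4b g) = T1 := by rw [pow_one, h1]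
    rw [e0, e1, hD2]
    simp only [map_add, map_smul, map_mul, diag_a, diag_b, Nat.factorial]
    norm_num
  · simp only [Finset.mem_range, not_lt] at hn3
    obtain ⟨m, rfl⟩ : ∃ m, n = m + 3 := ⟨n - 3, by omega⟩
    have hD3 : (D4 ^ 3) (emb4a f * emb4b g) = 0 := by
      rw [show (3:ℕ) = 1 + 1 + 1 by rfl, pow_add, pow_add, pow_one, Module.End.mul_apply,
        Module.End.mul_apply, h1, h2, h3]
    have : (D4 ^ (m + 3)) (emb4a f * emb4b g) = 0 := by
      rw [pow_add, Module.End.mul_apply, hD3, map_zero]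
    rw [this, smul_zero]

lemma moyal4_eq2 (lam : ℝ) (f g : P4) (hN : 2 ≤ f.totalDegree + g.totalDegree + 1)
    (T1 : Q4) (h1 : D4 (emb4a f * emb4b g) = T1) (h2 : D4 T1 = 0) :
    moyal4 lam f g = f * g + lam • diag4 T1 := by
  unfold moyal4
  rw [← Finset.sum_subset (Finset.range_subset_range.mpr hN) (fun n _ hn2 => ?_)]
  · rw [Finset.sum_range_succ, Finset.sum_range_one]
    have e0 : (D4 ^ 0) (emb4a f * emb4b g) = emb4a f * emb4b g := by
      rw [pow_zero, Module.End.one_apply]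
    have e1 : (D4 ^ 1) (emb4a f * emb4b g) = T1 := by rw [pow_one, h1]
    rw [e0, e1]
    simp only [map_add, map_smul, map_mul, diag_a, diag_b, Nat.factorial]
    norm_num
  · simp only [Finset.mem_range, not_lt] at hn2
    obtain ⟨m, rfl⟩ : ∃ m, n = m + 2 := ⟨n - 2, by omega⟩
    have hD2 : (D4 ^ 2) (emb4a f * emb4b g) = 0 := by
      rw [pow_two, Module.End.mul_apply, h1, h2]
    have : (D4 ^ (m + 2)) (emb4a f * emb4b g) = 0 := by
      rw [pow_add, Module.End.mul_apply, hD2, map_zero]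
    rw [this, smul_zero]

lemma pderiv_two (j : Fin 4) : pderiv j (2:P4) = 0 := by
  have h2 : (2:P4) = C 2 := (map_ofNat C 2).symm
  rw [h2]; exact pderiv_C

lemma star_left_x2sq (lam : ℝ) (g : P4) :
    moyal4 lam ((X 1 : P4)^2) g =
      X 1^2 * g + lam • (((2:P4) * X 1) * pderiv 3 g)
        + (lam^2/2) • ((2:P4) * pderiv 3 (pderiv 3 g)) := by
  have h1 : D4 (emb4a ((X 1:P4)^2) * emb4b g) = emb4a ((2:P4) * X 1) * emb4b (pderiv 3 g) := by
    rw [D4_apply]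
    simp [pderiv_pow]
  have h2 : D4 (emb4a ((2:P4) * X 1) * emb4b (pderiv 3 g)) =
      emb4a (2:P4) * emb4b (pderiv 3 (pderiv 3 g)) := by
    rw [D4_apply]
    simp [pderiv_mul, pderiv_two]
  have h3 : D4 (emb4a (2:P4) * emb4b (pderiv 3 (pderiv 3 g))) = 0 := by
    rw [D4_apply]
    simp [pderiv_two]
  have := moyal4_eq3 lam ((X 1:P4)^2) g (by rw [totalDegree_X_pow]; omega) _ _ h1 h2 h3
  rw [this]
  simp [diag_a, diag_b, map_mul, mul_comm]

lemma star_right_x2sq (lam : ℝ) (f : P4) :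
    moyal4 lam f ((X 1 : P4)^2) =
      f * X 1^2 - lam • (((2:P4) * X 1) * pderiv 3 f)
        + (lam^2/2) • ((2:P4) * pderiv 3 (pderiv 3 f)) := by
  have h1 : D4 (emb4a f * emb4b ((X 1:P4)^2)) =
      emb4a (-(pderiv 3 f)) * emb4b ((2:P4) * X 1) := by
    rw [D4_apply]
    simp [pderiv_pow]
  have h2 : D4 (emb4a (-(pderiv 3 f)) * emb4b ((2:P4) * X 1)) =
      emb4a (pderiv 3 (pderiv 3 f)) * emb4b (2:P4) := by
    rw [D4_apply]
    simp [pderiv_mul, pderiv_two]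
  have h3 : D4 (emb4a (pderiv 3 (pderiv 3 f)) * emb4b (2:P4)) = 0 := by
    rw [D4_apply]
    simp [pderiv_two]
  have := moyal4_eq3 lam f ((X 1:P4)^2) (by rw [totalDegree_X_pow]; omega) _ _ h1 h2 h3
  rw [this]
  simp [diag_a, diag_b, map_mul, map_neg]
  ring

lemma star_right_x2 (lam : ℝ) (k : P4) :
    moyal4 lam k (X 1) = k * X 1 - lam • pderiv 3 k := by
  have h1 : D4 (emb4a k * emb4b (X 1)) = emb4a (-(pderiv 3 k)) * emb4b 1 := by
    rw [D4_apply]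
    simp
  have h2 : D4 (emb4a (-(pderiv 3 k)) * emb4b 1) = 0 := by
    rw [D4_apply]
    simp [pderiv_one]
  have := moyal4_eq2 lam k (X 1) (by rw [totalDegree_X]; omega) _ h1 h2
  rw [this]
  simp [diag_a, diag_b, map_mul, map_neg, sub_eq_add_neg]

/-- Any h of the form
h = a(x₁,p₁) + b(x₁,p₁)·p₂ + (c(x₁,p₁) + d(x₁,p₁)·p₂ − b(x₁,p₁)·p₂²/(2λ)) ∗_λ x₂
lies in the normalizer of the left Moyal ideal J = {f ∗_λ x₂²}: x₂² ∗_λ h ∈ J. -/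
theorem stmt_8 (lam : ℝ) (hlam : lam ≠ 0) (a b c d : P4)
    (ha : pderiv (1 : Fin 4) a = 0) (ha' : pderiv (3 : Fin 4) a = 0)
    (hb : pderiv (1 : Fin 4) b = 0) (hb' : pderiv (3 : Fin 4) b = 0)
    (hc : pderiv (1 : Fin 4) c = 0) (hc' : pderiv (3 : Fin 4) c = 0)
    (hd : pderiv (1 : Fin 4) d = 0) (hd' : pderiv (3 : Fin 4) d = 0) :
    ∃ f : P4,
      moyal4 lam ((X 1 : P4) ^ 2)
          (a + b * X 3 +
            moyal4 lam (c + d * X 3 - (1 / (2 * lam)) • (b * (X 3 : P4) ^ 2)) (X 1)) =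
        moyal4 lam f ((X 1 : P4) ^ 2) := by
  rw [show (1 / (2 * lam) : ℝ) = lam⁻¹ * 2⁻¹ from by ring]
  set kE : P4 := c + d * X 3 - (lam⁻¹ * 2⁻¹) • (b * X 3 ^ 2) with hkE
  have hk3 : pderiv (3 : Fin 4) kE = d - (lam⁻¹ * 2⁻¹) • (b * (2 * X 3)) := by
    rw [hkE]
    simp [pderiv_mul, pderiv_pow, hb', hc', hd', Derivation.map_smul]
  set E3 : P4 := b + (X 1 * (d - (lam⁻¹ * 2⁻¹) • (b * (2 * X 3)))
      + lam • (lam⁻¹ * 2⁻¹) • (b * 2)) with hE3def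
  set GE : P4 := a + b * X 3 + (kE * X 1 - lam • (d - (lam⁻¹ * 2⁻¹) • (b * (2 * X 3))))
    with hGE
  have hG3 : pderiv (3 : Fin 4) GE = E3 := by
    rw [hGE, hE3def, hkE]
    simp [pderiv_mul, pderiv_pow, ha', hb', hc', hd', Derivation.map_smul, pderiv_two]
  have hE33 : pderiv (3 : Fin 4) E3 = -((lam⁻¹ * 2⁻¹) • (X 1 * (b * 2))) := by
    rw [hE3def]
    simp [pderiv_mul, pderiv_pow, hb', hd', Derivation.map_smul, pderiv_two]
  have hbX3 : pderiv (3 : Fin 4) (b * X 3) = b := by simp [pderiv_mul, hb']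
  refine ⟨GE + (4:ℝ) • (lam • d) - (4:ℝ) • (b * X 3), ?_⟩
  rw [star_right_x2 lam kE, hk3]
  rw [star_left_x2sq, star_right_x2sq]
  have hF3 : pderiv (3 : Fin 4) (GE + (4:ℝ) • (lam • d) - (4:ℝ) • (b * X 3))
      = E3 - (4:ℝ) • b := by
    rw [map_sub, map_add, Derivation.map_smul, Derivation.map_smul, Derivation.map_smul,
      hd', hG3, hbX3, smul_zero, smul_zero, add_zero]
  have hF33 : pderiv (3 : Fin 4) (E3 - (4:ℝ) • b)
      = -((lam⁻¹ * 2⁻¹) • (X 1 * (b * 2))) := by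
    rw [map_sub, hE33, Derivation.map_smul, hb', smul_zero, sub_zero]
  rw [hG3, hE33, hF3, hF33]
  have hrel : (2 : P4) * C lam * C (lam⁻¹ * 2⁻¹) = 1 := by
    rw [← map_ofNat (C : ℝ →+* P4) 2, ← map_mul, ← map_mul,
      show (2:ℝ) * lam * (lam⁻¹ * 2⁻¹) = 1 from by field_simp, map_one]
  rw [hE3def, hGE, hkE]
  simp only [smul_eq_C_mul, map_ofNat]
  linear_combination (4 * C lam * b * X 1 - 4 * b * X 3 * X 1 ^ 2) * hrel
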